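/- arXiv:2306.06784 — 5 statements merged into one kernel-verified Lean document; each statement's English description precedes it below -/
import Mathlib

section
/- Let Ω ⊆ ℝ^n be open and let φ_k : Ω → ℝ^{m_k+1}, k = 1, …, n, be smooth maps that are nowhere zero on Ω, and set ψ_k(x) := φ_k(x)/‖φ_k(x)‖ and ψ = (ψ_1, …, ψ_n) : Ω → ∏_k S^{m_k}. Assume that for all x ∈ Ω the derivative D_x ψ has rank n. Consider the random system f_k = ∑_{i=0}^{m_k} c_{k,i} φ_{k,i}, where the c_{k,i} are i.i.d. standard Gaussian random variables. Then with probability one, every zero of f in Ω is a regular zero, i.e., Z(f, Ω) = Z_r(f, Ω) almost surely. -/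
open MeasureTheory ProbabilityTheory

/-- The random system `f_k = ∑_i c_{k,i} φ_{k,i}`. -/
noncomputable def gaussianLinearComboSystem {n : ℕ} {m : Fin n → ℕ}
    (φ : (k : Fin n) → (Fin n → ℝ) → EuclideanSpace ℝ (Fin (m k + 1)))
    (c : (k : Fin n) → Fin (m k + 1) → ℝ) (x : Fin n → ℝ) : Fin n → ℝ :=
  fun k => ∑ i, c k i * φ k x i

open Set
open scoped NNReal ENNReal

theorem myPi_mono {ι : Type*} [Fintype ι] {α : ι → Type*} [∀ i, MeasurableSpace (α i)]
    {μ ν : ∀ i, Measure (α i)} (h : ∀ i, μ i ≤ ν i) : Measure.pi μ ≤ Measure.pi ν := by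
  refine Measure.le_intro fun s hs _ => ?_
  rw [Measure.pi_def, Measure.pi_def, toMeasure_apply _ _ hs, toMeasure_apply _ _ hs]
  have : (OuterMeasure.pi fun i => (μ i).toOuterMeasure)
      ≤ OuterMeasure.pi fun i => (ν i).toOuterMeasure := by
    rw [OuterMeasure.le_pi]
    intro t _
    refine (OuterMeasure.pi_pi_le _ t).trans ?_
    exact Finset.prod_le_prod' fun i _ => h i _
  exact this s

theorem myGauss_le_vol : gaussianReal 0 1 ≤ (volume : Measure ℝ) := by
  refine Measure.le_intro fun s hs _ => ?_
  rw [gaussianReal_of_var_ne_zero 0 one_ne_zero, withDensity_apply _ hs]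
  calc ∫⁻ x in s, gaussianPDF 0 1 x ≤ ∫⁻ _ in s, 1 := by
        refine lintegral_mono fun x => ?_
        rw [gaussianPDF]
        refine le_trans (ENNReal.ofReal_le_ofReal (q := 1) ?_) (by simp)
        rw [gaussianPDFReal]
        have h1 : Real.exp (-(x - 0) ^ 2 / (2 * (1:ℝ≥0))) ≤ 1 := by
          rw [Real.exp_le_one_iff]
          have : (0:ℝ) ≤ (x - 0)^2 := sq_nonneg _
          have h2 : (0:ℝ) < 2 * (1:ℝ≥0) := by norm_num
          apply div_nonpos_of_nonpos_of_nonneg <;> nlinarith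
        have h2 : (Real.sqrt (2 * Real.pi * (1:ℝ≥0)))⁻¹ ≤ 1 := by
          rw [inv_le_one_iff₀]
          right
          rw [show ((1:ℝ≥0):ℝ) = 1 by norm_num, mul_one, Real.one_le_sqrt]
          nlinarith [Real.pi_gt_three]
        calc (Real.sqrt (2 * Real.pi * (1:ℝ≥0)))⁻¹ * Real.exp (-(x - 0) ^ 2 / (2 * (1:ℝ≥0)))
            ≤ 1 * 1 := mul_le_mul h2 h1 (Real.exp_nonneg _) zero_le_one
          _ = 1 := by norm_num
      _ = volume s := setLIntegral_one s

lemma det_eq_zero_of_kernel {E : Type*} [NormedAddCommGroup E] [NormedSpace ℝ E]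
    [FiniteDimensional ℝ E] (L : E →L[ℝ] E) {w : E} (hw : w ≠ 0) (h : L w = 0) :
    L.det = 0 := by
  by_contra hdet
  have hdet' : LinearMap.det (L : E →ₗ[ℝ] E) ≠ 0 := hdet
  have hinj : Function.Injective ((L : E →ₗ[ℝ] E) : E → E) :=
    (LinearMap.equivOfDetNeZero (L : E →ₗ[ℝ] E) hdet').injective
  exact hw (hinj (by simpa using h))

section aux

variable {n : ℕ} {m : Fin n → ℕ}

def xiF (i : (k : Fin n) → Fin (m k + 1)) (c : (k : Fin n) → Fin (m k + 1) → ℝ) :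
    Fin n → ℝ := fun k => c k (i k)

noncomputable def projE (k : Fin n) (j : Fin (m k + 1)) :
    ((k : Fin n) → Fin (m k + 1) → ℝ) →L[ℝ] ℝ :=
  (ContinuousLinearMap.proj (R := ℝ) (φ := fun _ : Fin (m k + 1) => ℝ) j).comp
    (ContinuousLinearMap.proj (R := ℝ) (φ := fun k : Fin n => Fin (m k + 1) → ℝ) k)

noncomputable def LxiF (i : (k : Fin n) → Fin (m k + 1)) :
    ((k : Fin n) → Fin (m k + 1) → ℝ) →L[ℝ] (Fin n → ℝ) :=
  ContinuousLinearMap.pi fun k => projE k (i k)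

noncomputable def Tmap (φ : (k : Fin n) → (Fin n → ℝ) → EuclideanSpace ℝ (Fin (m k + 1)))
    (i : (k : Fin n) → Fin (m k + 1)) (c : (k : Fin n) → Fin (m k + 1) → ℝ) :
    (k : Fin n) → Fin (m k + 1) → ℝ :=
  fun k j => if j = i k then
      -(∑ j', if j' = i k then 0 else c k j' * φ k (xiF i c) j') / φ k (xiF i c) (i k)
    else c k j

def wvec (i : (k : Fin n) → Fin (m k + 1)) (v : Fin n → ℝ) :
    (k : Fin n) → Fin (m k + 1) → ℝ := fun k j => if j = i k then v k else 0

def Sset (φ : (k : Fin n) → (Fin n → ℝ) → EuclideanSpace ℝ (Fin (m k + 1)))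
    (Ω : Set (Fin n → ℝ)) (i : (k : Fin n) → Fin (m k + 1)) :
    Set ((k : Fin n) → Fin (m k + 1) → ℝ) :=
  {c | (xiF i c ∈ Ω ∧ ∀ k, φ k (xiF i c) (i k) ≠ 0) ∧
    ∃ v : Fin n → ℝ, v ≠ 0 ∧ HasDerivAt (fun t : ℝ => Tmap φ i (c + t • wvec i v)) 0 0}

lemma tmap_differentiableAt
    {Ω : Set (Fin n → ℝ)} (hΩ : IsOpen Ω)
    {φ : (k : Fin n) → (Fin n → ℝ) → EuclideanSpace ℝ (Fin (m k + 1))}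
    (hφ : ∀ k, ContDiffOn ℝ (⊤ : ℕ∞) (φ k) Ω) (i : (k : Fin n) → Fin (m k + 1))
    {c : (k : Fin n) → Fin (m k + 1) → ℝ}
    (h1 : xiF i c ∈ Ω) (h2 : ∀ k, φ k (xiF i c) (i k) ≠ 0) :
    DifferentiableAt ℝ (Tmap φ i) c := by
  have hφc : ∀ k j, DifferentiableAt ℝ
      (fun c' : (k : Fin n) → Fin (m k + 1) → ℝ => φ k (xiF i c') j) c := by
    intro k j
    have hφd : DifferentiableAt ℝ (φ k) (LxiF i c) :=
      (((hφ k) (xiF i c) h1).contDiffAt (hΩ.mem_nhds h1)).differentiableAt (by simp)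
    have h3 : DifferentiableAt ℝ (fun y : Fin n → ℝ => φ k y j) (LxiF i c) := by
      have := (EuclideanSpace.proj (𝕜 := ℝ) j).differentiableAt.comp (LxiF i c) hφd
      exact this
    have h4 := h3.comp c (LxiF i).differentiableAt
    exact h4
  refine differentiableAt_pi.2 fun k => ?_
  refine differentiableAt_pi.2 fun j => ?_
  by_cases hj : j = i k
  · simp only [Tmap, hj, eq_self_iff_true, if_true]
    simp only [div_eq_mul_inv]
    refine DifferentiableAt.mul ?_ ((hφc k (i k)).inv (h2 k))
    refine DifferentiableAt.neg ?_
    refine DifferentiableAt.fun_sum fun j' _ => ?_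
    by_cases hj' : j' = i k
    · simp only [hj', eq_self_iff_true, if_true]
      exact differentiableAt_const 0
    · simp only [if_neg hj']
      exact ((projE k j').differentiableAt).mul (hφc k j')
  · simp only [Tmap, if_neg hj]
    exact (projE k j).differentiableAt

lemma tmap_image_null
    {Ω : Set (Fin n → ℝ)} (hΩ : IsOpen Ω)
    {φ : (k : Fin n) → (Fin n → ℝ) → EuclideanSpace ℝ (Fin (m k + 1))}
    (hφ : ∀ k, ContDiffOn ℝ (⊤ : ℕ∞) (φ k) Ω) (i : (k : Fin n) → Fin (m k + 1)) :
    volume (Tmap φ i '' Sset φ Ω i) = 0 := by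
  refine addHaar_image_eq_zero_of_det_fderivWithin_eq_zero volume
    (f' := fun c => fderiv ℝ (Tmap φ i) c) ?_ ?_
  · intro c hc
    exact ((tmap_differentiableAt hΩ hφ i hc.1.1 hc.1.2).hasFDerivAt).hasFDerivWithinAt
  · rintro c ⟨⟨h1, h2⟩, v, hv, hder⟩
    have hdiff := tmap_differentiableAt hΩ hφ i h1 h2
    have hline : HasDerivAt (fun t : ℝ => c + t • wvec i v) (wvec i v) 0 := by
      have h := ((hasDerivAt_id (0:ℝ)).smul_const (wvec i v)).const_add c
      simpa using h
    have h0 : c + (0:ℝ) • wvec i v = c := by simp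
    have hF : HasFDerivAt (Tmap φ i) (fderiv ℝ (Tmap φ i) c)
        ((fun t : ℝ => c + t • wvec i v) 0) := by
      rw [show (fun t : ℝ => c + t • wvec i v) 0 = c from h0]
      exact hdiff.hasFDerivAt
    have hcomp := hF.comp_hasDerivAt 0 hline
    have hLw : fderiv ℝ (Tmap φ i) c (wvec i v) = 0 := hcomp.unique hder
    have hw : wvec i v ≠ 0 := by
      intro hzero
      apply hv; funext k
      have := congrFun (congrFun hzero k) (i k)
      simpa [wvec] using this
    exact det_eq_zero_of_kernel _ hw hLw

lemma sum_if_zero_eq {N : ℕ} (ik : Fin N) (g : Fin N → ℝ) :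
    (∑ j, if j = ik then (0:ℝ) else g j) = (∑ j, g j) - g ik := by
  have h1 : (∑ j, if j = ik then (0:ℝ) else g j)
      = ∑ j, (g j - if j = ik then g j else 0) :=
    Finset.sum_congr rfl (fun j _ => by by_cases h : j = ik <;> simp [h])
  rw [h1, Finset.sum_sub_distrib, Finset.sum_ite_eq' Finset.univ ik g]
  simp

lemma bad_subset
    {Ω : Set (Fin n → ℝ)} (hΩ : IsOpen Ω)
    {φ : (k : Fin n) → (Fin n → ℝ) → EuclideanSpace ℝ (Fin (m k + 1))}
    (hφ : ∀ k, ContDiffOn ℝ (⊤ : ℕ∞) (φ k) Ω)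
    (hφ0 : ∀ k, ∀ x ∈ Ω, φ k x ≠ 0) :
    {c : (k : Fin n) → Fin (m k + 1) → ℝ | ∃ x ∈ Ω,
        gaussianLinearComboSystem φ c x = 0 ∧
        ¬Function.Bijective (fderiv ℝ (gaussianLinearComboSystem φ c) x)}
      ⊆ ⋃ i : (k : Fin n) → Fin (m k + 1), Tmap φ i '' Sset φ Ω i := by
  rintro c ⟨x, hxΩ, hfx, hnb⟩
  set f := gaussianLinearComboSystem φ c with hf
  -- choose a nonvanishing coordinate for each k
  have hchoice : ∀ k, ∃ j, φ k x j ≠ 0 := by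
    intro k
    by_contra hcon
    push_neg at hcon
    exact hφ0 k x hxΩ (by ext j; exact hcon j)
  choose i hi using hchoice
  -- differentiability of φ components and of f at x
  have hφx : ∀ k, DifferentiableAt ℝ (φ k) x := fun k =>
    (((hφ k) x hxΩ).contDiffAt (hΩ.mem_nhds hxΩ)).differentiableAt (by simp)
  have hφxj : ∀ k j, DifferentiableAt ℝ (fun y => φ k y j) x := by
    intro k j
    have := (EuclideanSpace.proj (𝕜 := ℝ) j).differentiableAt.comp x (hφx k)
    exact this
  have hfdiff : DifferentiableAt ℝ f x := by
    refine differentiableAt_pi.2 fun k => ?_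
    have : (fun y => f y k) = fun y => ∑ j, c k j * φ k y j := rfl
    rw [this]
    exact DifferentiableAt.fun_sum fun j _ => (differentiableAt_const _).mul (hφxj k j)
  -- a nonzero kernel vector
  have hninj : ¬Function.Injective ⇑(fderiv ℝ f x) := by
    intro hinj
    apply hnb
    refine ⟨hinj, ?_⟩
    exact LinearMap.injective_iff_surjective.mp
      (show Function.Injective ((fderiv ℝ f x : (Fin n → ℝ) →ₗ[ℝ] (Fin n → ℝ))) from hinj)
  obtain ⟨a, b, hab, hne⟩ := Function.not_injective_iff.1 hninj
  set v : Fin n → ℝ := a - b with hvdef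
  have hv0 : v ≠ 0 := sub_ne_zero.2 hne
  have hLv : fderiv ℝ f x v = 0 := by rw [hvdef, map_sub, hab, sub_self]
  -- the preimage point
  set c' : (k : Fin n) → Fin (m k + 1) → ℝ := fun k j => if j = i k then x k else c k j
    with hc'
  have hxi : xiF i c' = x := by
    funext k
    simp [xiF, hc']
  have hfxk : ∀ k, (∑ j, c k j * φ k x j) = 0 := fun k => congrFun hfx k
  -- Tmap maps c' to c
  have hTc : Tmap φ i c' = c := by
    funext k j
    simp only [Tmap, hxi]
    by_cases hj : j = i k
    · subst hj
      rw [if_pos rfl]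
      have hcongr : ∀ j', (if j' = i k then (0:ℝ) else c' k j' * φ k x j')
          = (if j' = i k then 0 else c k j' * φ k x j') := by
        intro j'
        by_cases h : j' = i k <;> simp [h, hc']
      rw [Finset.sum_congr rfl (fun j' _ => hcongr j'), sum_if_zero_eq, hfxk k,
        zero_sub, neg_neg, mul_div_assoc, div_self (hi k), mul_one]
    · rw [if_neg hj]
      simp [hc', hj]
  -- the line in parameter space
  set ℓ : ℝ → (Fin n → ℝ) := fun t => x + t • v with hℓ
  have hl0 : ℓ 0 = x := by simp [hℓ]
  have hl : HasDerivAt ℓ v 0 := by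
    have h := ((hasDerivAt_id (0:ℝ)).smul_const v).const_add x
    simpa [hℓ] using h
  have hxiline : ∀ t, xiF i (c' + t • wvec i v) = ℓ t := by
    intro t
    funext k'
    simp [xiF, hc', wvec, hℓ]
  -- the derivative property
  have hder : HasDerivAt (fun t : ℝ => Tmap φ i (c' + t • wvec i v)) 0 0 := by
    refine hasDerivAt_pi.2 fun k => ?_
    refine hasDerivAt_pi.2 fun j => ?_
    by_cases hj : j = i k
    · subst hj
      -- key scalar functions
      set q : ℝ → ℝ := fun t => φ k (ℓ t) (i k) with hqdef
      set F : ℝ → ℝ := fun t => f (ℓ t) k with hFdef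
      set A : ℝ := c k (i k) with hA
      have hfun : (fun t : ℝ => Tmap φ i (c' + t • wvec i v) k (i k))
          = fun t => -((F t - A * q t) / q t) := by
        funext t
        simp only [Tmap, if_pos rfl, hxiline t]
        have hcongr : ∀ j', (if j' = i k then (0:ℝ) else (c' + t • wvec i v) k j' * φ k (ℓ t) j')
            = (if j' = i k then 0 else c k j' * φ k (ℓ t) j') := by
          intro j'
          by_cases h : j' = i k <;> simp [h, hc', wvec]
        rw [Finset.sum_congr rfl (fun j' _ => hcongr j'), sum_if_zero_eq]
        rw [neg_div]
        rfl
      rw [hfun]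
      -- derivatives of the pieces
      have hφl : HasDerivAt (fun t => φ k (ℓ t)) (fderiv ℝ (φ k) x v) 0 := by
        have hFd : HasFDerivAt (φ k) (fderiv ℝ (φ k) x) (ℓ 0) := by
          rw [hl0]; exact (hφx k).hasFDerivAt
        exact hFd.comp_hasDerivAt 0 hl
      have hq : HasDerivAt q (EuclideanSpace.proj (𝕜 := ℝ) (i k) (fderiv ℝ (φ k) x v)) 0 := by
        have := (EuclideanSpace.proj (𝕜 := ℝ) (i k)).hasFDerivAt.comp_hasDerivAt 0 hφl
        exact this
      set d : ℝ := EuclideanSpace.proj (𝕜 := ℝ) (i k) (fderiv ℝ (φ k) x v) with hd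
      have hFder : HasDerivAt F 0 0 := by
        have hfF : HasFDerivAt f (fderiv ℝ f x) (ℓ 0) := by
          rw [hl0]; exact hfdiff.hasFDerivAt
        have h := hfF.comp_hasDerivAt 0 hl
        rw [hLv] at h
        have hk := hasDerivAt_pi.1 h k
        exact hk
      have hq0 : q 0 ≠ 0 := by
        have : q 0 = φ k x (i k) := by rw [hqdef]; simp only [hl0]
        rw [this]
        exact hi k
      have hF0 : F 0 = 0 := by
        have : F 0 = f x k := by rw [hFdef]; simp only [hl0]
        rw [this, hfx]
        rfl
      have h1 : HasDerivAt (fun t => F t - A * q t) (0 - A * d) 0 :=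
        hFder.sub (hq.const_mul A)
      have h2 := h1.div hq hq0
      have h3 := h2.neg
      have hval : -(((0 - A * d) * q 0 - (F 0 - A * q 0) * d) / q 0 ^ 2) = 0 := by
        rw [hF0]
        have : ((0 - A * d) * q 0 - (0 - A * q 0) * d) = 0 := by ring
        rw [this, zero_div, neg_zero]
      rw [hval] at h3
      exact h3
    · have : (fun t : ℝ => Tmap φ i (c' + t • wvec i v) k j) = fun _ => c' k j := by
        funext t
        simp [Tmap, hj, wvec]
      rw [this]
      exact hasDerivAt_const _ _
  refine Set.mem_iUnion.2 ⟨i, ⟨c', ⟨⟨?_, ?_⟩, v, hv0, hder⟩, hTc⟩⟩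
  · rw [hxi]; exact hxΩ
  · rw [hxi]; exact hi

end aux

theorem zeros_regular_almost_surely
    (n : ℕ) (Ω : Set (Fin n → ℝ)) (hΩ : IsOpen Ω) (m : Fin n → ℕ)
    (φ : (k : Fin n) → (Fin n → ℝ) → EuclideanSpace ℝ (Fin (m k + 1)))
    (hφ : ∀ k, ContDiffOn ℝ (⊤ : ℕ∞) (φ k) Ω)
    (hφ0 : ∀ k, ∀ x ∈ Ω, φ k x ≠ 0)
    (ψ : (Fin n → ℝ) → (k : Fin n) → EuclideanSpace ℝ (Fin (m k + 1)))
    (hψ : ψ = fun x k => ‖φ k x‖⁻¹ • φ k x)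
    (hrank : ∀ x ∈ Ω,
      LinearMap.rank ((fderiv ℝ ψ x :
        (Fin n → ℝ) →ₗ[ℝ] ((k : Fin n) → EuclideanSpace ℝ (Fin (m k + 1))))) = n) :
    ∀ᵐ c ∂(Measure.pi fun k : Fin n => Measure.pi fun _ : Fin (m k + 1) =>
        gaussianReal 0 1),
      {x | x ∈ Ω ∧ gaussianLinearComboSystem φ c x = 0}
        = {x | x ∈ Ω ∧ gaussianLinearComboSystem φ c x = 0 ∧
            Function.Bijective (fderiv ℝ (gaussianLinearComboSystem φ c) x)} := by
  classical
  set μG := (Measure.pi fun k : Fin n => Measure.pi fun _ : Fin (m k + 1) =>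
      gaussianReal 0 1) with hμG
  set Bad := {c : (k : Fin n) → Fin (m k + 1) → ℝ | ∃ x ∈ Ω,
      gaussianLinearComboSystem φ c x = 0 ∧
      ¬Function.Bijective (fderiv ℝ (gaussianLinearComboSystem φ c) x)} with hBad
  have hsub : Bad ⊆ ⋃ i : (k : Fin n) → Fin (m k + 1), Tmap φ i '' Sset φ Ω i :=
    bad_subset hΩ hφ hφ0
  have hvolN : volume (⋃ i : (k : Fin n) → Fin (m k + 1), Tmap φ i '' Sset φ Ω i) = 0 :=
    measure_iUnion_null fun i => tmap_image_null hΩ hφ i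
  have hle : μG ≤ (volume : Measure ((k : Fin n) → Fin (m k + 1) → ℝ)) := by
    rw [hμG, show (volume : Measure ((k : Fin n) → Fin (m k + 1) → ℝ))
        = Measure.pi (fun k : Fin n => Measure.pi fun _ : Fin (m k + 1) =>
            (volume : Measure ℝ)) from rfl]
    exact myPi_mono fun k => myPi_mono fun _ => myGauss_le_vol
  have hBadNull : μG Bad = 0 := by
    refine le_antisymm ?_ zero_le
    calc μG Bad ≤ μG (⋃ i : (k : Fin n) → Fin (m k + 1), Tmap φ i '' Sset φ Ω i) :=
          measure_mono hsub
      _ ≤ volume (⋃ i : (k : Fin n) → Fin (m k + 1), Tmap φ i '' Sset φ Ω i) := hle _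
      _ = 0 := hvolN
  rw [ae_iff]
  refine measure_mono_null ?_ hBadNull
  intro c hc
  simp only [Set.mem_setOf_eq] at hc
  rw [hBad]
  simp only [Set.mem_setOf_eq]
  by_contra hcon
  push_neg at hcon
  apply hc
  ext y
  simp only [Set.mem_setOf_eq]
  constructor
  · rintro ⟨h1, h2⟩
    exact ⟨h1, h2, hcon y h1 h2⟩
  · rintro ⟨h1, h2, _⟩
    exact ⟨h1, h2⟩
end

section
/- Let γ_1, …, γ_n ∈ ℝ^n and s_1, …, s_n ∈ ℝ, and consider the random binomial system h given by h_k(x) = a_k exp(γ_kᵀx + s_k) + b_k, k = 1, …, n, where the a_k and b_k are i.i.d. standard Gaussian random variables. Let B := {x ∈ ℝ^n : γ_kᵀx + s_k ≤ 0 for all k}. Then the expected number of regular zeros of h in B satisfies E_h #Z_r(h, B) ≤ 4^{-n}. -/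
/-!
At a regular zero `x` of `h` every `a_k` is nonzero, so `γ_kᵀ x + s_k = log (-b_k / a_k)` is
determined by the coefficients, and invertibility of the Jacobian forces `x` to be unique.
Such an `x` lies in `B` exactly when `-b_k / a_k = exp (γ_kᵀ x + s_k) ∈ (0, 1]` for all `k`,
so `#Z_r(h, B)` is at most the indicator of "every pair `(a_k, b_k)` lies in the wedge
`|b| ≤ |a|, ab ≤ 0`". By independence the expectation is at most `P(wedge)^n`, and for a
symmetric atomless law the wedge has probability at most `1/4`: up to null lines, it and its
images under `(a, b) ↦ (b, a)`, `(a, b) ↦ (a, -b)` and `(a, b) ↦ (b, -a)` are disjoint and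
equally likely.
-/

open MeasureTheory ProbabilityTheory

/-- The random binomial system `h_k(x) = a_k exp(γ_kᵀ x + s_k) + b_k`. -/
noncomputable def binomialSystem {n : ℕ} (γ : Fin n → Fin n → ℝ) (s : Fin n → ℝ)
    (ab : (Fin n → ℝ) × (Fin n → ℝ)) (x : Fin n → ℝ) : Fin n → ℝ :=
  fun k => ab.1 k * Real.exp ((∑ i, γ k i * x i) + s k) + ab.2 k

open scoped ENNReal NNReal

def regularZeros {E F : Type*} [NormedAddCommGroup E] [NormedSpace ℝ E]
    [NormedAddCommGroup F] [NormedSpace ℝ F] (f : E → F) (B : Set E) : Set E :=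
  {x | x ∈ B ∧ f x = 0 ∧ Function.Bijective (fderiv ℝ f x)}

def binomialWedge : Set (ℝ × ℝ) := {p | |p.2| ≤ |p.1| ∧ p.1 * p.2 ≤ 0}

theorem mem_binomialWedge_of_mul_exp_add_eq_zero {a b t : ℝ} (h : a * Real.exp t + b = 0)
    (ht : t ≤ 0) : (a, b) ∈ binomialWedge := by
  have hb : b = -(a * Real.exp t) := by linarith
  have hexp : Real.exp t ≤ 1 := Real.exp_le_one_iff.2 ht
  refine ⟨?_, ?_⟩
  · calc |b| = |a| * Real.exp t := by rw [hb, abs_neg, abs_mul, Real.abs_exp]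
      _ ≤ |a| := mul_le_of_le_one_right (abs_nonneg a) hexp
  · calc a * b = -(a ^ 2 * Real.exp t) := by rw [hb]; ring
      _ ≤ 0 := neg_nonpos.2 (by positivity)

section BinomialSystem

variable {n : ℕ} (γ : Fin n → Fin n → ℝ) (s : Fin n → ℝ)
    (ab : (Fin n → ℝ) × (Fin n → ℝ))

theorem fderiv_binomialSystem_apply (x v : Fin n → ℝ) :
    fderiv ℝ (binomialSystem γ s ab) x v =
      fun k => ab.1 k * Real.exp ((∑ i, γ k i * x i) + s k) * ∑ i, γ k i * v i := by
  have hrow (k : Fin n) := HasFDerivAt.fun_sum (u := Finset.univ) fun i _ =>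
    (hasFDerivAt_apply (𝕜 := ℝ) i x).const_mul (γ k i)
  have hD : HasFDerivAt (binomialSystem γ s ab) _ x := hasFDerivAt_pi.2 fun k =>
    (((hrow k).add_const (s k)).exp.const_mul (ab.1 k)).add_const (ab.2 k)
  ext k
  simp [hD.fderiv, mul_assoc]

theorem fst_ne_zero_of_surjective_fderiv_binomialSystem {x : Fin n → ℝ}
    (hD : Function.Surjective (fderiv ℝ (binomialSystem γ s ab) x)) (k : Fin n) :
    ab.1 k ≠ 0 := by
  intro hk
  obtain ⟨v, hv⟩ := hD (Pi.single k 1)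
  simpa [fderiv_binomialSystem_apply, hk] using congrFun hv k

theorem eq_of_binomialSystem_eq_zero {x y : Fin n → ℝ} (hx : binomialSystem γ s ab x = 0)
    (hD : Function.Bijective (fderiv ℝ (binomialSystem γ s ab) x))
    (hy : binomialSystem γ s ab y = 0) : y = x := by
  have hrow : ∀ k, ∑ i, γ k i * y i = ∑ i, γ k i * x i := by
    intro k
    have hxk : ab.1 k * Real.exp ((∑ i, γ k i * x i) + s k) + ab.2 k = 0 := congrFun hx k
    have hyk : ab.1 k * Real.exp ((∑ i, γ k i * y i) + s k) + ab.2 k = 0 := congrFun hy k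
    have hexp := mul_left_cancel₀ (fst_ne_zero_of_surjective_fderiv_binomialSystem γ s ab hD.2 k)
      (hyk.trans hxk.symm |> add_right_cancel)
    exact add_right_cancel (Real.exp_injective hexp)
  refine sub_eq_zero.1 (hD.1 ?_)
  ext k
  simp [fderiv_binomialSystem_apply, mul_sub, Finset.sum_sub_distrib, hrow k]

theorem encard_regularZeros_binomialSystem_le_one (B : Set (Fin n → ℝ)) :
    (regularZeros (binomialSystem γ s ab) B).encard ≤ 1 :=
  Set.encard_le_one_iff.2 fun _ _ hy hz =>
    eq_of_binomialSystem_eq_zero γ s ab hz.2.1 hz.2.2 hy.2.1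

theorem encard_regularZeros_binomialSystem_le_indicator {B : Set (Fin n → ℝ)}
    (hB : ∀ x ∈ B, ∀ k, (∑ i, γ k i * x i) + s k ≤ 0) :
    ((regularZeros (binomialSystem γ s ab) B).encard : ℝ≥0∞) ≤
      Set.indicator {c : (Fin n → ℝ) × (Fin n → ℝ) | ∀ k, (c.1 k, c.2 k) ∈ binomialWedge} 1 ab := by
  rcases (regularZeros (binomialSystem γ s ab) B).eq_empty_or_nonempty
    with h | ⟨x, hxB, hx0, -⟩
  · simp [h]
  · have hab : ∀ k, (ab.1 k, ab.2 k) ∈ binomialWedge := fun k =>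
      mem_binomialWedge_of_mul_exp_add_eq_zero (congrFun hx0 k) (hB x hxB k)
    rw [Set.indicator_of_mem (by exact hab), Pi.one_apply]
    exact_mod_cast encard_regularZeros_binomialSystem_le_one γ s ab _

end BinomialSystem

namespace MeasureTheory

theorem measure_pi_prod_pi_setOf_forall_mem {ι α β : Type*} [Fintype ι] [MeasurableSpace α]
    [MeasurableSpace β] (μ : ι → Measure α) (ν : ι → Measure β) [∀ i, SigmaFinite (μ i)]
    [∀ i, SigmaFinite (ν i)] (Q : ι → Set (α × β)) :
    (Measure.pi μ).prod (Measure.pi ν) {ab | ∀ i, (ab.1 i, ab.2 i) ∈ Q i} =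
      ∏ i, ((μ i).prod (ν i)) (Q i) := by
  rw [← Measure.pi_pi, ← (measurePreserving_arrowProdEquivProdArrow α β ι μ ν).symm
    |>.measure_preimage_equiv]
  congr 1
  ext ab
  simp [MeasurableEquiv.arrowProdEquivProdArrow, Equiv.arrowProdEquivProdArrow]

theorem Measure.prod_setOf_snd_eq_null {α β : Type*} [MeasurableSpace α] [MeasurableSpace β]
    [MeasurableEq β] (μ : Measure α) (ν : Measure β) [SFinite ν] [NullSingletonClass ν]
    {f : α → β} (hf : Measurable f) : μ.prod ν {p | p.2 = f p.1} = 0 := by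
  have hs : MeasurableSet {p : α × β | p.2 = f p.1} :=
    measurableSet_eq_fun measurable_snd (hf.comp measurable_fst)
  rw [Measure.prod_apply hs]
  simp [Set.preimage]

theorem MeasurePreserving.measure_union_preimage_of_disjoint {α : Type*} [MeasurableSpace α]
    {μ : Measure α} {f : α → α} (hf : MeasurePreserving f μ μ) {s : Set α}
    (hs : MeasurableSet s) (hd : Disjoint s (f ⁻¹' s)) : μ (s ∪ f ⁻¹' s) = 2 * μ s := by
  rw [measure_union hd (hf.measurable hs), hf.measure_preimage hs.nullMeasurableSet, two_mul]

end MeasureTheory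

instance isNegInvariant_gaussianReal_zero (v : ℝ≥0) : (gaussianReal 0 v).IsNegInvariant :=
  ⟨by simpa [Measure.neg_def] using gaussianReal_map_neg (μ := 0) (v := v)⟩

theorem measure_binomialWedge_diff_null (μ ν : Measure ℝ) [SFinite ν] [NullSingletonClass ν] :
    μ.prod ν (binomialWedge \ {p | |p.2| < |p.1| ∧ p.1 * p.2 < 0}) = 0 := by
  refine measure_mono_null (t := {p | p.2 = p.1} ∪ {p | p.2 = -p.1} ∪ {p | p.2 = 0}) ?_
    (measure_union_null (measure_union_null
      (Measure.prod_setOf_snd_eq_null μ ν measurable_id)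
      (Measure.prod_setOf_snd_eq_null μ ν measurable_neg))
      (Measure.prod_setOf_snd_eq_null μ ν measurable_const))
  rintro ⟨a, b⟩ ⟨⟨hab, hmul⟩, hstrict⟩
  simp only [Set.mem_union]
  rcases hab.eq_or_lt with h | h
  · exact .inl (abs_eq_abs.1 h)
  · have hmul0 : a * b = 0 := by
      by_contra hne
      exact hstrict ⟨h, hmul.lt_of_ne hne⟩
    rcases mul_eq_zero.1 hmul0 with rfl | rfl
    · exact absurd h (by simp)
    · exact .inr rfl

theorem prod_binomialWedge_le (μ : Measure ℝ) [IsProbabilityMeasure μ] [NullSingletonClass μ]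
    [μ.IsNegInvariant] : μ.prod μ binomialWedge ≤ 4⁻¹ := by
  set Q₀ : Set (ℝ × ℝ) := {p | |p.2| < |p.1| ∧ p.1 * p.2 < 0}
  set R := Q₀ ∪ Prod.swap ⁻¹' Q₀
  have hQ₀ : MeasurableSet Q₀ := by measurability
  have hR : MeasurableSet R := hQ₀.union (measurable_swap hQ₀)
  have hswap : MeasurePreserving Prod.swap (μ.prod μ) (μ.prod μ) :=
    Measure.measurePreserving_swap
  have hneg : MeasurePreserving (fun p : ℝ × ℝ => (p.1, -p.2)) (μ.prod μ) (μ.prod μ) :=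
    (MeasurePreserving.id μ).prod (Measure.measurePreserving_neg μ)
  have hQ₀swap : Disjoint Q₀ (Prod.swap ⁻¹' Q₀) :=
    Set.disjoint_left.2 fun _ h₁ h₂ => lt_asymm h₁.1 h₂.1
  have hRneg : Disjoint R ((fun p : ℝ × ℝ => (p.1, -p.2)) ⁻¹' R) := by
    have hsign : ∀ p ∈ R, p.1 * p.2 < 0 := by
      rintro ⟨a, b⟩ (h | h)
      · exact h.2
      · exact (mul_comm a b).trans_lt h.2
    refine Set.disjoint_left.2 fun p h₁ h₂ => ?_
    have := hsign _ h₂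
    simp only [mul_neg, neg_lt_zero] at this
    exact lt_asymm this (hsign p h₁)
  calc μ.prod μ binomialWedge ≤ μ.prod μ Q₀ :=
        measure_mono_ae (ae_le_set.2 (measure_binomialWedge_diff_null μ μ))
    _ ≤ 4⁻¹ := by
      rw [ENNReal.le_inv_iff_mul_le]
      calc μ.prod μ Q₀ * 4 = 2 * (2 * μ.prod μ Q₀) := by ring
        _ = μ.prod μ (R ∪ (fun p : ℝ × ℝ => (p.1, -p.2)) ⁻¹' R) := by
          rw [hneg.measure_union_preimage_of_disjoint hR hRneg,
            hswap.measure_union_preimage_of_disjoint hQ₀ hQ₀swap]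
        _ ≤ 1 := prob_le_one

theorem expected_regular_zeros_binomial_le
    (n : ℕ) (γ : Fin n → Fin n → ℝ) (s : Fin n → ℝ)
    (B : Set (Fin n → ℝ)) (hB : B = {x | ∀ k, (∑ i, γ k i * x i) + s k ≤ 0}) :
    ∫⁻ ab, (({x | x ∈ B ∧ binomialSystem γ s ab x = 0 ∧
          Function.Bijective (fderiv ℝ (binomialSystem γ s ab) x)}).encard : ENNReal)
        ∂((Measure.pi fun _ : Fin n => gaussianReal 0 1).prod
            (Measure.pi fun _ : Fin n => gaussianReal 0 1))
      ≤ ((4 : ENNReal) ^ n)⁻¹ := by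
  subst hB
  have := nullSingletonClass_gaussianReal (μ := 0) (v := 1) one_ne_zero
  calc _ ≤ ∫⁻ ab, Set.indicator _ 1 ab ∂_ :=
        lintegral_mono fun ab =>
          encard_regularZeros_binomialSystem_le_indicator γ s ab fun _ hx => hx
    _ ≤ _ := lintegral_indicator_one_le _
    _ = ∏ _ : Fin n, (gaussianReal 0 1).prod (gaussianReal 0 1) binomialWedge :=
        measure_pi_prod_pi_setOf_forall_mem _ _ _
    _ ≤ ∏ _ : Fin n, (4 : ℝ≥0∞)⁻¹ :=
        Finset.prod_le_prod' fun _ _ => prod_binomialWedge_le _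
    _ = ((4 : ℝ≥0∞) ^ n)⁻¹ := by simp [ENNReal.inv_pow]
end

section
/- Let A ⊂ ℝ^n be a finite set and π : A → ℝ a function such that π(α) ≤ 0 for all α ∈ A, with π(α) = 0 whenever α is an extreme point of P := conv(A). Then the upper envelope satisfies L(A, π) = (−∞, 0] × P, that is, conv{(π(α) − s, α) : α ∈ A, s ≥ 0} = {(y, p) ∈ ℝ × ℝ^n : y ≤ 0, p ∈ conv(A)}. -/
/-!
The generators `(π α - s, α)` all lie in the convex set `(-∞, 0] × conv A`, which gives one
inclusion. Conversely, by Minkowski's theorem `conv A` is the convex hull of its vertices `V ⊆ A`,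
where `π` vanishes; so for `y ≤ 0` the whole slice `{y} × V` consists of generators (take
`s = -y`), and its convex hull is `{y} × conv A`.
-/

/-- The upper envelope `L(A, π) = conv{(π(α) - s, α) : α ∈ A, s ≥ 0} ⊆ ℝ^{1+n}`. -/
noncomputable def upperEnvelope {n : ℕ} (A : Finset (Fin n → ℝ)) (π : (Fin n → ℝ) → ℝ) :
    Set (ℝ × (Fin n → ℝ)) :=
  convexHull ℝ {p : ℝ × (Fin n → ℝ) | ∃ α ∈ A, ∃ s : ℝ, 0 ≤ s ∧ p = (π α - s, α)}

open Set

theorem Set.Finite.convexHull_extremePoints_convexHull {E : Type*} [AddCommGroup E] [Module ℝ E]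
    [TopologicalSpace E] [T2Space E] [IsTopologicalAddGroup E] [ContinuousSMul ℝ E]
    [LocallyConvexSpace ℝ E] {A : Set E} (hA : A.Finite) :
    convexHull ℝ ((convexHull ℝ A).extremePoints ℝ) = convexHull ℝ A := by
  have hV : ((convexHull ℝ A).extremePoints ℝ).Finite := hA.subset extremePoints_convexHull_subset
  rw [← (hV.isClosed_convexHull ℝ).closure_eq]
  exact closure_convexHull_extremePoints (hA.isCompact_convexHull ℝ) (convex_convexHull ℝ A)

section DownwardRays

variable {E : Type*} [AddCommGroup E] [Module ℝ E]

def downwardRays (A : Set E) (π : E → ℝ) : Set (ℝ × E) :=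
  {p | ∃ α ∈ A, ∃ s : ℝ, 0 ≤ s ∧ p = (π α - s, α)}

theorem convexHull_downwardRays_subset {A : Set E} {π : E → ℝ} (hπ : ∀ α ∈ A, π α ≤ 0) :
    convexHull ℝ (downwardRays A π) ⊆ Iic 0 ×ˢ convexHull ℝ A := by
  refine convexHull_min ?_ ((convex_Iic 0).prod (convex_convexHull ℝ A))
  rintro _ ⟨α, hα, s, hs, rfl⟩
  exact ⟨show π α - s ≤ 0 by linarith [hπ α hα], subset_convexHull ℝ A hα⟩

theorem Iic_prod_convexHull_subset_convexHull_downwardRays {A V : Set E} {π : E → ℝ}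
    (hVA : V ⊆ A) (hV : convexHull ℝ V = convexHull ℝ A) (hπV : ∀ v ∈ V, π v = 0) :
    Iic 0 ×ˢ convexHull ℝ A ⊆ convexHull ℝ (downwardRays A π) := by
  rintro ⟨y, p⟩ ⟨hy, hp⟩
  have hslice : {y} ×ˢ V ⊆ downwardRays A π := by
    rintro ⟨z, v⟩ ⟨hz : z = y, hv⟩
    exact ⟨v, hVA hv, -y, neg_nonneg.2 hy, by simp [hz, hπV v hv]⟩
  refine convexHull_mono hslice ?_
  rw [convexHull_prod, convexHull_singleton, hV]
  exact ⟨rfl, hp⟩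

end DownwardRays

theorem upperEnvelope_eq_of_nonpos_vanishing_on_vertices
    (n : ℕ) (A : Finset (Fin n → ℝ)) (π : (Fin n → ℝ) → ℝ)
    (hπ : ∀ α ∈ A, π α ≤ 0)
    (hπ0 : ∀ α ∈ A,
      α ∈ Set.extremePoints ℝ (convexHull ℝ (A : Set (Fin n → ℝ))) → π α = 0) :
    upperEnvelope A π
      = {p : ℝ × (Fin n → ℝ) | p.1 ≤ 0 ∧ p.2 ∈ convexHull ℝ (A : Set (Fin n → ℝ))} := by
  have hVA : (convexHull ℝ (A : Set (Fin n → ℝ))).extremePoints ℝ ⊆ A :=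
    extremePoints_convexHull_subset
  change convexHull ℝ (downwardRays (A : Set (Fin n → ℝ)) π) = Iic 0 ×ˢ convexHull ℝ A
  exact (convexHull_downwardRays_subset hπ).antisymm
    (Iic_prod_convexHull_subset_convexHull_downwardRays hVA
      A.finite_toSet.convexHull_extremePoints_convexHull fun v hv => hπ0 v (hVA hv) hv)
end

section
/- Let d_1, …, d_{n+1} ∈ ℕ and let A_1, …, A_{n+1} ⊂ ℕ^{n+1} be finite sets such that for each k every α ∈ A_k satisfies α_0 + ⋯ + α_n = d_k and {d_k e_0, …, d_k e_n} ⊆ A_k (where e_0, …, e_n is the standard basis). For each k and each α ∈ A_k, let μ_{k,α} be a Borel probability measure on ℝ absolutely continuous with respect to Lebesgue measure, and let the coefficients g_{k,α} be distributed according to the product measure ⊗_{k,α} μ_{k,α}. Consider the homogeneous fewnomial system g_k(x) = ∑_{α∈A_k} g_{k,α} x^α, k = 1, …, n+1, in the variables x = (x_0, …, x_n). Then, with probability one, the system g_1(x) = ⋯ = g_{n+1}(x) = 0 has no solution x ∈ ℝ^{n+1} ∖ {0}. -/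
open MeasureTheory

/-- A homogeneous fewnomial system on `ℝ^{n+1}` with supports `A k ⊆ ℕ^{n+1}`. -/
noncomputable def homSystem {n : ℕ} (A : Fin (n + 1) → Finset (Fin (n + 1) → ℕ))
    (c : (k : Fin (n + 1)) → {α // α ∈ A k} → ℝ) (x : Fin (n + 1) → ℝ) :
    Fin (n + 1) → ℝ :=
  fun k => ∑ α : {α // α ∈ A k}, c k α * ∏ i, (x i) ^ (α.1 i)

/-!
A nonzero root can be rescaled into one of the affine charts `{x i = 1}`, where the pure power
`x_i ^ d_k` becomes the constant `1`. Each equation can then be solved for that coefficient, so the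
systems with a root in the chart form the image of a `C¹` map whose domain has `n` chart
coordinates plus all the other coefficients: one dimension fewer than the coefficient space,
because there are `n + 1` equations. Such an image has Hausdorff dimension too small to carry
Lebesgue measure, and a product of absolutely continuous laws does not charge Lebesgue-null sets.
-/

open Set Module

namespace MeasureTheory.Measure

theorem AbsolutelyContinuous.pi_fin (m : ℕ) {α : Fin m → Type*} [∀ i, MeasurableSpace (α i)]
    {μ ν : ∀ i, Measure (α i)} [∀ i, SigmaFinite (μ i)] [∀ i, SigmaFinite (ν i)]
    (h : ∀ i, μ i ≪ ν i) : Measure.pi μ ≪ Measure.pi ν := by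
  induction m with
  | zero => rw [Measure.pi_of_empty μ, Measure.pi_of_empty ν]
  | succ m ih =>
    let e := MeasurableEquiv.piFinSuccAbove α 0
    rw [← ((measurePreserving_piFinSuccAbove μ 0).symm e).map_eq,
      ← ((measurePreserving_piFinSuccAbove ν 0).symm e).map_eq]
    exact e.symm.measurableEmbedding.absolutelyContinuous_map
      ((h 0).prod (ih fun j => h _))

theorem AbsolutelyContinuous.pi {ι : Type*} [Fintype ι] {α : ι → Type*}
    [∀ i, MeasurableSpace (α i)] {μ ν : ∀ i, Measure (α i)} [∀ i, SigmaFinite (μ i)]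
    [∀ i, SigmaFinite (ν i)] (h : ∀ i, μ i ≪ ν i) : Measure.pi μ ≪ Measure.pi ν := by
  let e := (Fintype.equivFin ι).symm
  rw [← (measurePreserving_piCongrLeft μ e).map_eq, ← (measurePreserving_piCongrLeft ν e).map_eq]
  exact (MeasurableEquiv.piCongrLeft α e).measurableEmbedding.absolutelyContinuous_map
    (AbsolutelyContinuous.pi_fin _ fun i => h (e i))

theorem addHaar_range_eq_zero_of_finrank_lt {E F : Type*}
    [NormedAddCommGroup E] [NormedSpace ℝ E] [FiniteDimensional ℝ E] [MeasurableSpace E]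
    [BorelSpace E] [NormedAddCommGroup F] [NormedSpace ℝ F] [FiniteDimensional ℝ F]
    (μ : Measure E) [μ.IsAddHaarMeasure] {f : F → E} (hf : ContDiff ℝ 1 f)
    (hfin : finrank ℝ F < finrank ℝ E) : μ (range f) = 0 := by
  refine absolutelyContinuous_isAddHaarMeasure μ μH[finrank ℝ E] ?_
  have hdim : dimH (range f) < (finrank ℝ E : NNReal) :=
    hf.dimH_range_le.trans_lt (by exact_mod_cast hfin)
  simpa using hausdorffMeasure_of_dimH_lt hdim

end MeasureTheory.Measure

section Overdetermined

variable {K : Type*} {ι : K → Type*} [∀ k, Fintype (ι k)] [∀ k, DecidableEq (ι k)] {X : Type*}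

/-- Keeps the off-pivot coefficients `p.2` and solves each equation `∑ j, c k j * φ k j y = 0`
at `y = p.1` for its pivot coefficient `c k (a k)`, assuming `φ k (a k) = 1`. -/
noncomputable def solvePivots (a : ∀ k, ι k) (φ : ∀ k, ι k → X → ℝ)
    (p : X × ∀ k, {j // j ≠ a k} → ℝ) : ∀ k, ι k → ℝ :=
  fun k j => if h : j = a k then -∑ l, p.2 k l * φ k l p.1 else p.2 k ⟨j, h⟩

theorem setOf_exists_common_zero_subset_range_solvePivots {a : ∀ k, ι k}
    {φ : ∀ k, ι k → X → ℝ} (hφa : ∀ k, φ k (a k) = 1) :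
    {c : ∀ k, ι k → ℝ | ∃ y, ∀ k, ∑ j, c k j * φ k j y = 0} ⊆ range (solvePivots a φ) := by
  rintro c ⟨y, hy⟩
  refine ⟨(y, fun k l => c k l), funext fun k => funext fun j => ?_⟩
  unfold solvePivots
  split_ifs with h
  · subst h
    have := hy k
    rw [Fintype.sum_eq_add_sum_subtype_ne _ (a k), hφa, Pi.one_apply, mul_one] at this
    linarith
  · rfl

variable [Fintype K] [NormedAddCommGroup X] [NormedSpace ℝ X]

theorem contDiff_solvePivots (a : ∀ k, ι k) {φ : ∀ k, ι k → X → ℝ}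
    (hφ : ∀ k j, ContDiff ℝ 1 (φ k j)) : ContDiff ℝ 1 (solvePivots a φ) := by
  have hcoeff : ∀ k l, ContDiff ℝ 1 fun p : X × ∀ k, {j // j ≠ a k} → ℝ => p.2 k l :=
    fun k l => contDiff_pi.1 (contDiff_pi.1 contDiff_snd k) l
  refine contDiff_pi.2 fun k => contDiff_pi.2 fun j => ?_
  unfold solvePivots
  by_cases h : j = a k
  · simp only [dif_pos h]
    exact (ContDiff.sum fun l _ => (hcoeff k l).mul ((hφ k l).comp contDiff_fst)).neg
  · simp only [dif_neg h]
    exact hcoeff k _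

variable [FiniteDimensional ℝ X]

theorem finrank_solvePivots_domain_lt (a : ∀ k, ι k) (h : finrank ℝ X < Fintype.card K) :
    finrank ℝ (X × ∀ k, {j // j ≠ a k} → ℝ) < finrank ℝ (∀ k, ι k → ℝ) := by
  have hcard : ∀ k, Fintype.card (ι k) = Fintype.card {j // j ≠ a k} + 1 := fun k => by
    have := Fintype.card_pos_iff.2 ⟨a k⟩
    simp only [ne_eq, Fintype.card_subtype_compl, Fintype.card_unique]
    omega
  simp only [Module.finrank_prod, Module.finrank_pi_fintype, Module.finrank_self, mul_one,
    hcard, Finset.sum_add_distrib, Finset.sum_const, Finset.card_univ, smul_eq_mul]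
  omega

theorem addHaar_setOf_exists_common_zero_eq_zero [MeasurableSpace (∀ k, ι k → ℝ)]
    [BorelSpace (∀ k, ι k → ℝ)] (μ : Measure (∀ k, ι k → ℝ)) [μ.IsAddHaarMeasure]
    {a : ∀ k, ι k} {φ : ∀ k, ι k → X → ℝ} (hφ : ∀ k j, ContDiff ℝ 1 (φ k j))
    (hφa : ∀ k, φ k (a k) = 1) (h : finrank ℝ X < Fintype.card K) :
    μ {c | ∃ y, ∀ k, ∑ j, c k j * φ k j y = 0} = 0 :=
  measure_mono_null (setOf_exists_common_zero_subset_range_solvePivots hφa)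
    (Measure.addHaar_range_eq_zero_of_finrank_lt μ (contDiff_solvePivots a hφ)
      (finrank_solvePivots_domain_lt a h))

end Overdetermined

section Homogeneous

variable {n : ℕ}

def affineChart (i : Fin (n + 1)) (y : {j // j ≠ i} → ℝ) : Fin (n + 1) → ℝ :=
  fun j => if h : j = i then 1 else y ⟨j, h⟩

theorem contDiff_prod_affineChart_pow (i : Fin (n + 1)) (α : Fin (n + 1) → ℕ) :
    ContDiff ℝ 1 fun y => ∏ j, affineChart i y j ^ α j := by
  refine contDiff_prod fun j _ => ContDiff.pow ?_ _
  unfold affineChart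
  by_cases h : j = i
  · simp only [dif_pos h]
    exact contDiff_const
  · simp only [dif_neg h]
    exact contDiff_apply ℝ ℝ _

theorem prod_affineChart_pow_single (i : Fin (n + 1)) (y : {j // j ≠ i} → ℝ) (m : ℕ) :
    ∏ j, affineChart i y j ^ (fun l => if l = i then m else 0) j = 1 :=
  Finset.prod_eq_one fun j _ => by
    by_cases h : j = i <;> simp [affineChart, h]

theorem homSystem_smul {d : Fin (n + 1) → ℕ} {A : Fin (n + 1) → Finset (Fin (n + 1) → ℕ)}
    (hdeg : ∀ k, ∀ α ∈ A k, ∑ i, α i = d k) (c : (k : Fin (n + 1)) → {α // α ∈ A k} → ℝ)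
    (t : ℝ) (x : Fin (n + 1) → ℝ) (k : Fin (n + 1)) :
    homSystem A c (t • x) k = t ^ d k * homSystem A c x k := by
  simp only [homSystem, Pi.smul_apply, smul_eq_mul, mul_pow, Finset.prod_mul_distrib,
    Finset.prod_pow_eq_pow_sum, Finset.mul_sum]
  refine Finset.sum_congr rfl fun α _ => ?_
  rw [hdeg k α α.2]
  ring

theorem exists_affineChart_root {d : Fin (n + 1) → ℕ} {A : Fin (n + 1) → Finset (Fin (n + 1) → ℕ)}
    (hdeg : ∀ k, ∀ α ∈ A k, ∑ i, α i = d k) {c : (k : Fin (n + 1)) → {α // α ∈ A k} → ℝ}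
    {x : Fin (n + 1) → ℝ} (hx : x ≠ 0) (hroot : homSystem A c x = 0) :
    ∃ i y, homSystem A c (affineChart i y) = 0 := by
  obtain ⟨i, hi⟩ : ∃ i, x i ≠ 0 := Function.ne_iff.1 hx
  refine ⟨i, fun j => (x i)⁻¹ * x j, ?_⟩
  have hchart : affineChart i (fun j => (x i)⁻¹ * x j) = (x i)⁻¹ • x := funext fun j => by
    by_cases h : j = i
    · subst h
      simp [affineChart, hi]
    · simp [affineChart, h]
  funext k
  rw [hchart, homSystem_smul hdeg, hroot, Pi.zero_apply, mul_zero]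

theorem measure_setOf_exists_affineChart_root_eq_zero {d : Fin (n + 1) → ℕ}
    {A : Fin (n + 1) → Finset (Fin (n + 1) → ℕ)}
    (μ : Measure ((k : Fin (n + 1)) → {α // α ∈ A k} → ℝ)) [μ.IsAddHaarMeasure]
    {i : Fin (n + 1)} (hcorner : ∀ k, (fun l => if l = i then d k else 0) ∈ A k) :
    μ {c | ∃ y, homSystem A c (affineChart i y) = 0} = 0 := by
  simp only [funext_iff, homSystem, Pi.zero_apply]
  refine addHaar_setOf_exists_common_zero_eq_zero μ (a := fun k => ⟨_, hcorner k⟩)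
    (fun k α => contDiff_prod_affineChart_pow i α) (fun k => funext fun y => ?_) ?_
  · exact prod_affineChart_pow_single i y (d k)
  · simp

end Homogeneous

theorem overdetermined_homogeneous_no_nonzero_root_almost_surely
    (n : ℕ) (d : Fin (n + 1) → ℕ) (A : Fin (n + 1) → Finset (Fin (n + 1) → ℕ))
    (hdeg : ∀ k, ∀ α ∈ A k, ∑ i, α i = d k)
    (hcorners : ∀ k, ∀ j : Fin (n + 1), (fun i => if i = j then d k else 0) ∈ A k)
    (μ : (k : Fin (n + 1)) → {α // α ∈ A k} → Measure ℝ)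
    (hprob : ∀ k α, IsProbabilityMeasure (μ k α))
    (hac : ∀ k α, μ k α ≪ volume) :
    ∀ᵐ c ∂(Measure.pi fun k => Measure.pi fun α => μ k α),
      ¬∃ x : Fin (n + 1) → ℝ, x ≠ 0 ∧ homSystem A c x = 0 := by
  have : ∀ k α, IsProbabilityMeasure (μ k α) := hprob
  let lebesgue := Measure.pi fun k => Measure.pi fun _ : {α // α ∈ A k} => (volume : Measure ℝ)
  have hbad : {c | ∃ x : Fin (n + 1) → ℝ, x ≠ 0 ∧ homSystem A c x = 0} ⊆
      ⋃ i, {c | ∃ y, homSystem A c (affineChart i y) = 0} :=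
    fun c ⟨_, hx, hroot⟩ => mem_iUnion.2 (exists_affineChart_root hdeg hx hroot)
  have hnull : lebesgue (⋃ i, {c | ∃ y, homSystem A c (affineChart i y) = 0}) = 0 :=
    measure_iUnion_null fun i =>
      measure_setOf_exists_affineChart_root_eq_zero lebesgue fun k => hcorners k i
  have hac' : (Measure.pi fun k => Measure.pi fun α => μ k α) ≪ lebesgue :=
    .pi fun k => .pi (hac k)
  rw [ae_iff]
  simpa only [not_not] using measure_mono_null hbad (hac' hnull)
end

section
/- Let X be a σ-compact topological space and let μ and ν be Borel measures on X. Suppose there is a collection 𝒰 of open subsets of X such that: (U0) 𝒰 is a base for the topology of X; (U1) 𝒰 is closed under containment, i.e., if V ⊆ U are open and U ∈ 𝒰, then V ∈ 𝒰; (U2) μ(U) < ∞ and ν(U) < ∞ for all U ∈ 𝒰; and (U3) μ(U) = ν(U) for all U ∈ 𝒰. Then μ = ν, i.e., μ(B) = ν(B) for every Borel set B ⊆ X. -/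
/-!
A finite measure on a topological space with its Borel σ-algebra is determined by its values on
open sets, which form a π-system generating the σ-algebra. For `U ∈ 𝒰` the restrictions `μ|U` and
`ν|U` are finite and agree on every open `O`, because `O ∩ U ∈ 𝒰`; hence `μ|U = ν|U`. A σ-compact
space is Lindelöf, so countably many members of the base `𝒰` cover `X`, and measures whose
restrictions agree on each set of a countable cover are equal.
-/

open MeasureTheory Set

namespace MeasureTheory.Measure

variable {X : Type*} [TopologicalSpace X] [MeasurableSpace X] [BorelSpace X] {μ ν : Measure X}

theorem ext_of_forall_isOpen [IsFiniteMeasure μ] (h : ∀ O, IsOpen O → μ O = ν O) : μ = ν :=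
  ext_of_generate_finite _ BorelSpace.measurable_eq isPiSystem_isOpen h (h univ isOpen_univ)

theorem restrict_eq_of_forall_isOpen_inter {U : Set X} (hU : μ U ≠ ⊤)
    (h : ∀ O, IsOpen O → μ (O ∩ U) = ν (O ∩ U)) : μ.restrict U = ν.restrict U := by
  have : IsFiniteMeasure (μ.restrict U) := isFiniteMeasure_restrict.2 hU
  refine ext_of_forall_isOpen fun O hO => ?_
  rw [restrict_apply hO.measurableSet, restrict_apply hO.measurableSet, h O hO]

end MeasureTheory.Measure

theorem exists_countable_subset_sUnion_eq_univ {X : Type*} [TopologicalSpace X] [LindelofSpace X]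
    {𝒰 : Set (Set X)} (hopen : ∀ U ∈ 𝒰, IsOpen U) (hcover : ⋃₀ 𝒰 = univ) :
    ∃ S ⊆ 𝒰, S.Countable ∧ ⋃₀ S = univ := by
  obtain ⟨S, hS𝒰, hSc, hS⟩ := isLindelof_univ.elim_countable_subcover_image (c := fun U => U)
    hopen (hcover.symm.subset.trans sUnion_eq_biUnion.subset)
  exact ⟨S, hS𝒰, hSc, univ_subset_iff.1 (hS.trans sUnion_eq_biUnion.symm.subset)⟩

theorem borel_measures_eq_of_agree_on_base
    {X : Type*} [TopologicalSpace X] [MeasurableSpace X] [BorelSpace X]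
    [SigmaCompactSpace X] (μ ν : Measure X) (𝒰 : Set (Set X))
    (hopen : ∀ U ∈ 𝒰, IsOpen U)
    (hbase : ∀ O : Set X, IsOpen O → ∃ S ⊆ 𝒰, O = ⋃₀ S)
    (hdown : ∀ U V : Set X, U ∈ 𝒰 → IsOpen V → V ⊆ U → V ∈ 𝒰)
    (hfin : ∀ U ∈ 𝒰, μ U < ⊤ ∧ ν U < ⊤)
    (hagree : ∀ U ∈ 𝒰, μ U = ν U) :
    μ = ν := by
  obtain ⟨𝒱, h𝒱𝒰, h𝒱⟩ := hbase univ isOpen_univ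
  obtain ⟨S, hS𝒱, hSc, hS⟩ :=
    exists_countable_subset_sUnion_eq_univ (fun U hU => hopen U (h𝒱𝒰 hU)) h𝒱.symm
  rw [← Measure.restrict_univ (μ := μ), ← Measure.restrict_univ (μ := ν), ← hS,
    Measure.restrict_sUnion_congr hSc]
  intro U hU
  have hU𝒰 : U ∈ 𝒰 := h𝒱𝒰 (hS𝒱 hU)
  exact Measure.restrict_eq_of_forall_isOpen_inter (hfin U hU𝒰).1.ne fun O hO =>
    hagree _ (hdown U _ hU𝒰 (hO.inter (hopen U hU𝒰)) inter_subset_right)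
end
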